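/- Let m be a positive integer, η = diag(1, −1, …, −1) ∈ Mₘ(ℝ), and Λ any associative unital ℝ-algebra. Let ε ∈ Λ, let p = (p₁, …, p_m) be a row vector over Λ, and let e ∈ Mₘ(ℝ) be invertible with g := eᵀηe (real matrices acting on matrices over Λ via scalars). Then blockdiag(1, e, 1)⁻¹ · [[ε, p e⁻¹, 0],[0, 0, η⁻¹(e⁻¹)ᵀ pᵀ],[0, 0, −ε]] · blockdiag(1, e, 1) + ε · blockdiag(0, 1ₘ, 0) = [[ε, p, 0],[0, ε·1ₘ, g⁻¹pᵀ],[0, 0, −ε]] (blocks of sizes (1, m, 1)). That is, dressing the first composite ghost (with Lorentz ghost set to zero) by the vielbein dressing field u₀ = blockdiag(1, e, 1), and adding the inhomogeneous term ε·blockdiag(0, 1ₘ, 0) coming from s_W u₀ = ε̃u₀, yields the final composite Weyl ghost v̂_W = [[ε, p, 0],[0, ε·1ₘ, g⁻¹pᵀ],[0, 0, −ε]], which depends only on the Weyl ghost ε, its derivative covector p, and the metric g. -/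

import Mathlib

open Matrix

/-- 3×3 block matrix with block sizes (1, m, 1). -/
def B3 {R : Type*} {m : ℕ}
    (a11 : Matrix (Fin 1) (Fin 1) R) (a12 : Matrix (Fin 1) (Fin m) R) (a13 : Matrix (Fin 1) (Fin 1) R)
    (a21 : Matrix (Fin m) (Fin 1) R) (a22 : Matrix (Fin m) (Fin m) R) (a23 : Matrix (Fin m) (Fin 1) R)
    (a31 : Matrix (Fin 1) (Fin 1) R) (a32 : Matrix (Fin 1) (Fin m) R) (a33 : Matrix (Fin 1) (Fin 1) R) :
    Matrix (Fin 1 ⊕ (Fin m ⊕ Fin 1)) (Fin 1 ⊕ (Fin m ⊕ Fin 1)) R :=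
  Matrix.fromBlocks a11 (Matrix.fromCols a12 a13) (Matrix.fromRows a21 a31)
    (Matrix.fromBlocks a22 a23 a32 a33)

/-- Block extractors for a 3×3 block matrix with block sizes (1, m, 1). -/
def blk11 {R : Type*} {m : ℕ} (M : Matrix (Fin 1 ⊕ (Fin m ⊕ Fin 1)) (Fin 1 ⊕ (Fin m ⊕ Fin 1)) R) :
    Matrix (Fin 1) (Fin 1) R := M.submatrix Sum.inl Sum.inl
def blk12 {R : Type*} {m : ℕ} (M : Matrix (Fin 1 ⊕ (Fin m ⊕ Fin 1)) (Fin 1 ⊕ (Fin m ⊕ Fin 1)) R) :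
    Matrix (Fin 1) (Fin m) R := M.submatrix Sum.inl (fun j => Sum.inr (Sum.inl j))
def blk13 {R : Type*} {m : ℕ} (M : Matrix (Fin 1 ⊕ (Fin m ⊕ Fin 1)) (Fin 1 ⊕ (Fin m ⊕ Fin 1)) R) :
    Matrix (Fin 1) (Fin 1) R := M.submatrix Sum.inl (fun j => Sum.inr (Sum.inr j))
def blk21 {R : Type*} {m : ℕ} (M : Matrix (Fin 1 ⊕ (Fin m ⊕ Fin 1)) (Fin 1 ⊕ (Fin m ⊕ Fin 1)) R) :
    Matrix (Fin m) (Fin 1) R := M.submatrix (fun i => Sum.inr (Sum.inl i)) Sum.inl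
def blk22 {R : Type*} {m : ℕ} (M : Matrix (Fin 1 ⊕ (Fin m ⊕ Fin 1)) (Fin 1 ⊕ (Fin m ⊕ Fin 1)) R) :
    Matrix (Fin m) (Fin m) R := M.submatrix (fun i => Sum.inr (Sum.inl i)) (fun j => Sum.inr (Sum.inl j))
def blk23 {R : Type*} {m : ℕ} (M : Matrix (Fin 1 ⊕ (Fin m ⊕ Fin 1)) (Fin 1 ⊕ (Fin m ⊕ Fin 1)) R) :
    Matrix (Fin m) (Fin 1) R := M.submatrix (fun i => Sum.inr (Sum.inl i)) (fun j => Sum.inr (Sum.inr j))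
def blk31 {R : Type*} {m : ℕ} (M : Matrix (Fin 1 ⊕ (Fin m ⊕ Fin 1)) (Fin 1 ⊕ (Fin m ⊕ Fin 1)) R) :
    Matrix (Fin 1) (Fin 1) R := M.submatrix (fun i => Sum.inr (Sum.inr i)) Sum.inl
def blk32 {R : Type*} {m : ℕ} (M : Matrix (Fin 1 ⊕ (Fin m ⊕ Fin 1)) (Fin 1 ⊕ (Fin m ⊕ Fin 1)) R) :
    Matrix (Fin 1) (Fin m) R := M.submatrix (fun i => Sum.inr (Sum.inr i)) (fun j => Sum.inr (Sum.inl j))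
def blk33 {R : Type*} {m : ℕ} (M : Matrix (Fin 1 ⊕ (Fin m ⊕ Fin 1)) (Fin 1 ⊕ (Fin m ⊕ Fin 1)) R) :
    Matrix (Fin 1) (Fin 1) R := M.submatrix (fun i => Sum.inr (Sum.inr i)) (fun j => Sum.inr (Sum.inr j))

/-- The Minkowski matrix `diag(1, −1, …, −1)` of signature `(1, m−1)`. -/
def Mink (m : ℕ) : Matrix (Fin m) (Fin m) ℝ :=
  Matrix.diagonal fun i => if (i : ℕ) = 0 then 1 else -1


/-! Since `u₀ = blockdiag(1, e, 1)` is block diagonal, conjugating the ghost by it only multiplies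
`p e⁻¹` on the right by `e` and `η⁻¹ e⁻ᵀ pᵀ` on the left by `e⁻¹`; the latter gives `g⁻¹ pᵀ`
because `(eᵀ η e)⁻¹ = e⁻¹ η⁻¹ e⁻ᵀ`. The inhomogeneous term then fills in the middle block `ε·1ₘ`. -/

section BlockMatrix

variable {R S : Type*} {m : ℕ}

lemma B3_mul [Ring R]
    (a11 : Matrix (Fin 1) (Fin 1) R) (a12 : Matrix (Fin 1) (Fin m) R) (a13 : Matrix (Fin 1) (Fin 1) R)
    (a21 : Matrix (Fin m) (Fin 1) R) (a22 : Matrix (Fin m) (Fin m) R) (a23 : Matrix (Fin m) (Fin 1) R)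
    (a31 : Matrix (Fin 1) (Fin 1) R) (a32 : Matrix (Fin 1) (Fin m) R) (a33 : Matrix (Fin 1) (Fin 1) R)
    (b11 : Matrix (Fin 1) (Fin 1) R) (b12 : Matrix (Fin 1) (Fin m) R) (b13 : Matrix (Fin 1) (Fin 1) R)
    (b21 : Matrix (Fin m) (Fin 1) R) (b22 : Matrix (Fin m) (Fin m) R) (b23 : Matrix (Fin m) (Fin 1) R)
    (b31 : Matrix (Fin 1) (Fin 1) R) (b32 : Matrix (Fin 1) (Fin m) R) (b33 : Matrix (Fin 1) (Fin 1) R) :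
    B3 a11 a12 a13 a21 a22 a23 a31 a32 a33 * B3 b11 b12 b13 b21 b22 b23 b31 b32 b33
      = B3 (a11*b11 + a12*b21 + a13*b31) (a11*b12 + a12*b22 + a13*b32) (a11*b13 + a12*b23 + a13*b33)
           (a21*b11 + a22*b21 + a23*b31) (a21*b12 + a22*b22 + a23*b32) (a21*b13 + a22*b23 + a23*b33)
           (a31*b11 + a32*b21 + a33*b31) (a31*b12 + a32*b22 + a33*b32) (a31*b13 + a32*b23 + a33*b33) := by
  ext (i|i|i) (j|j|j) <;>
    simp [B3, fromBlocks_multiply, fromCols_mul_fromRows, fromCols_mul_fromBlocks,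
      mul_fromCols, fromBlocks_mul_fromRows, fromRows_mul, add_assoc]

lemma B3_add [Add R]
    (a11 : Matrix (Fin 1) (Fin 1) R) (a12 : Matrix (Fin 1) (Fin m) R) (a13 : Matrix (Fin 1) (Fin 1) R)
    (a21 : Matrix (Fin m) (Fin 1) R) (a22 : Matrix (Fin m) (Fin m) R) (a23 : Matrix (Fin m) (Fin 1) R)
    (a31 : Matrix (Fin 1) (Fin 1) R) (a32 : Matrix (Fin 1) (Fin m) R) (a33 : Matrix (Fin 1) (Fin 1) R)
    (b11 : Matrix (Fin 1) (Fin 1) R) (b12 : Matrix (Fin 1) (Fin m) R) (b13 : Matrix (Fin 1) (Fin 1) R)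
    (b21 : Matrix (Fin m) (Fin 1) R) (b22 : Matrix (Fin m) (Fin m) R) (b23 : Matrix (Fin m) (Fin 1) R)
    (b31 : Matrix (Fin 1) (Fin 1) R) (b32 : Matrix (Fin 1) (Fin m) R) (b33 : Matrix (Fin 1) (Fin 1) R) :
    B3 a11 a12 a13 a21 a22 a23 a31 a32 a33 + B3 b11 b12 b13 b21 b22 b23 b31 b32 b33
      = B3 (a11+b11) (a12+b12) (a13+b13) (a21+b21) (a22+b22) (a23+b23)
           (a31+b31) (a32+b32) (a33+b33) := by
  ext (i|i|i) (j|j|j) <;> rfl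

lemma B3_smul [SMul S R] (c : S)
    (a11 : Matrix (Fin 1) (Fin 1) R) (a12 : Matrix (Fin 1) (Fin m) R) (a13 : Matrix (Fin 1) (Fin 1) R)
    (a21 : Matrix (Fin m) (Fin 1) R) (a22 : Matrix (Fin m) (Fin m) R) (a23 : Matrix (Fin m) (Fin 1) R)
    (a31 : Matrix (Fin 1) (Fin 1) R) (a32 : Matrix (Fin 1) (Fin m) R) (a33 : Matrix (Fin 1) (Fin 1) R) :
    c • B3 a11 a12 a13 a21 a22 a23 a31 a32 a33
      = B3 (c•a11) (c•a12) (c•a13) (c•a21) (c•a22) (c•a23) (c•a31) (c•a32) (c•a33) := by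
  ext (i|i|i) (j|j|j) <;> rfl

lemma B3_map (f : R → S)
    (a11 : Matrix (Fin 1) (Fin 1) R) (a12 : Matrix (Fin 1) (Fin m) R) (a13 : Matrix (Fin 1) (Fin 1) R)
    (a21 : Matrix (Fin m) (Fin 1) R) (a22 : Matrix (Fin m) (Fin m) R) (a23 : Matrix (Fin m) (Fin 1) R)
    (a31 : Matrix (Fin 1) (Fin 1) R) (a32 : Matrix (Fin 1) (Fin m) R) (a33 : Matrix (Fin 1) (Fin 1) R) :
    (B3 a11 a12 a13 a21 a22 a23 a31 a32 a33).map f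
      = B3 (a11.map f) (a12.map f) (a13.map f) (a21.map f) (a22.map f) (a23.map f)
           (a31.map f) (a32.map f) (a33.map f) := by
  ext (i|i|i) (j|j|j) <;> rfl

lemma B3_one [Zero R] [One R] :
    (1 : Matrix (Fin 1 ⊕ (Fin m ⊕ Fin 1)) (Fin 1 ⊕ (Fin m ⊕ Fin 1)) R) = B3 1 0 0 0 1 0 0 0 1 := by
  ext (i|i|i) (j|j|j) <;> simp [B3, one_apply]

lemma B3_blockDiag_map [NonAssocSemiring R] [NonAssocSemiring S] (f : R →+* S)
    (A : Matrix (Fin m) (Fin m) R) :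
    (B3 1 0 0 0 A 0 0 0 1).map f = B3 1 0 0 0 (A.map f) 0 0 0 1 := by
  simp [B3_map, Matrix.map_zero _ (map_zero f), Matrix.map_one _ (map_zero f) (map_one f)]

lemma inv_B3_blockDiag [CommRing R] {A : Matrix (Fin m) (Fin m) R} (hA : IsUnit A.det) :
    (B3 1 0 0 0 A 0 0 0 1)⁻¹ = B3 1 0 0 0 A⁻¹ 0 0 0 1 := by
  refine inv_eq_left_inv ?_
  simp [B3_mul, nonsing_inv_mul A hA, B3_one]

lemma B3_blockDiag_conj [Ring R] (E F : Matrix (Fin m) (Fin m) R)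
    (a c : Matrix (Fin 1) (Fin 1) R) (x : Matrix (Fin 1) (Fin m) R) (y : Matrix (Fin m) (Fin 1) R) :
    B3 1 0 0 0 F 0 0 0 1 * B3 a x 0 0 0 y 0 0 c * B3 1 0 0 0 E 0 0 0 1
      = B3 a (x * E) 0 0 0 (F * y) 0 0 c := by
  simp [B3_mul]

end BlockMatrix

lemma inv_transpose_mul_mul {K : Type*} [CommRing K] {m : ℕ} (A G : Matrix (Fin m) (Fin m) K) :
    (Aᵀ * G * A)⁻¹ = A⁻¹ * (G⁻¹ * A⁻¹ᵀ) := by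
  rw [Matrix.mul_inv_rev, Matrix.mul_inv_rev, transpose_nonsing_inv]

theorem stmt_19_general (m : ℕ) (Λ : Type*) [Ring Λ] [Algebra ℝ Λ]
    (ε : Λ) (p : Matrix (Fin 1) (Fin m) Λ)
    (e : Matrix (Fin m) (Fin m) ℝ) (he : IsUnit e.det) :
    ((B3 1 0 0 0 e 0 0 0 1)⁻¹).map (algebraMap ℝ Λ)
        * B3 (ε • 1) (p * (e⁻¹.map (algebraMap ℝ Λ))) 0
            0 0 ((((Mink m)⁻¹ * e⁻¹.transpose).map (algebraMap ℝ Λ)) * p.transpose)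
            0 0 ((-ε) • 1)
        * (B3 1 0 0 0 e 0 0 0 1).map (algebraMap ℝ Λ)
      + ε • B3 0 0 0 0 (1 : Matrix (Fin m) (Fin m) Λ) 0 0 0 0
      = B3 (ε • 1) p 0
          0 (ε • (1 : Matrix (Fin m) (Fin m) Λ))
          ((((e.transpose * Mink m * e)⁻¹).map (algebraMap ℝ Λ)) * p.transpose)
          0 0 ((-ε) • 1) := by
  have hinv : e⁻¹.map (algebraMap ℝ Λ) * e.map (algebraMap ℝ Λ) = 1 := by
    rw [← Matrix.map_mul, nonsing_inv_mul e he, Matrix.map_one _ (map_zero _) (map_one _)]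
  rw [inv_B3_blockDiag (m := m) he, B3_blockDiag_map, B3_blockDiag_map,
    B3_blockDiag_conj, B3_smul, B3_add, Matrix.mul_assoc, hinv, ← Matrix.mul_assoc, ← Matrix.map_mul,
    ← inv_transpose_mul_mul]
  simp

/-- Dressing the first composite ghost (with Lorentz ghost set to zero) by the vielbein
dressing field `u₀ = blockdiag(1, e, 1)` and adding the inhomogeneous term
`ε·blockdiag(0, 1ₘ, 0)` coming from `s_W u₀ = ε̃u₀` yields the final composite Weyl ghost
`v̂_W = [[ε, p, 0],[0, ε·1ₘ, g⁻¹pᵀ],[0, 0, −ε]]`, depending only on the Weyl ghost `ε`,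
its derivative covector `p`, and the metric `g = eᵀηe`. -/
theorem stmt_19 (m : ℕ) (hm : 0 < m) (Λ : Type*) [Ring Λ] [Algebra ℝ Λ]
    (ε : Λ) (p : Matrix (Fin 1) (Fin m) Λ)
    (e : Matrix (Fin m) (Fin m) ℝ) (he : IsUnit e.det) :
    ((B3 1 0 0 0 e 0 0 0 1)⁻¹).map (algebraMap ℝ Λ)
        * B3 (ε • 1) (p * (e⁻¹.map (algebraMap ℝ Λ))) 0
            0 0 ((((Mink m)⁻¹ * e⁻¹.transpose).map (algebraMap ℝ Λ)) * p.transpose)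
            0 0 ((-ε) • 1)
        * (B3 1 0 0 0 e 0 0 0 1).map (algebraMap ℝ Λ)
      + ε • B3 0 0 0 0 (1 : Matrix (Fin m) (Fin m) Λ) 0 0 0 0
      = B3 (ε • 1) p 0
          0 (ε • (1 : Matrix (Fin m) (Fin m) Λ))
          ((((e.transpose * Mink m * e)⁻¹).map (algebraMap ℝ Λ)) * p.transpose)
          0 0 ((-ε) • 1) :=
  stmt_19_general m Λ ε p e he
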